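/- arXiv:2310.16437 — 2 statements merged into one kernel-verified Lean document; each statement's English description precedes it below -/
import Mathlib

section
/- Let (v₁, v₂) be an orthonormal basis of ℝ², let 0 < d₁ < d₂, and let p_{i,j} = i·d₁·v₁ + j·d₂·v₂. Let u be a unit vector in ℝ², s ≥ 1, and set c = ⟨u, v₁⟩, s₁ = √((s² − 1)·c² + 1) and s₂ = √((s² − 1)·(1 − c²) + 1). Then for all integers i, j: ‖S_{u,s}(p_{i+1,j}) − S_{u,s}(p_{i,j})‖₂ = s₁·d₁ and ‖S_{u,s}(p_{i,j+1}) − S_{u,s}(p_{i,j})‖₂ = s₂·d₂. Moreover, for any two grid points in different rows (j ≠ j′), ‖S_{u,s}(p_{i,j}) − S_{u,s}(p_{i′,j′})‖₂ ≥ d₂. -/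
/-!
Because `U` is orthogonal with `U u = e₁`, the scaling map is `x ↦ x + (s - 1)⟪u, x⟫ u`, hence
`‖S x‖² = ‖x‖² + (s² - 1)⟪u, x⟫²`. Differences of grid points are grid points, horizontal and
vertical neighbours differ by `d₁ v₁` and `d₂ v₂`, and `⟪u, v₂⟫² = 1 - ⟪u, v₁⟫²` by Parseval.
For `s ≥ 1` the map `S` does not shrink vectors, and a grid vector `p_{i,j}` with `j ≠ 0` has
`v₂`-component of absolute value at least `d₂`.
-/

open scoped RealInnerProductSpace

/-- The directional scaling map `S_{u,α} = U⁻¹ ⬝ diag(α,1,…,1) ⬝ U` on Euclidean space,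
for an orthogonal base-change matrix `U` (with `U u = e₁`) and scaling factor `α`. -/
noncomputable def scalingMap {n : ℕ} [NeZero n] (U : Matrix (Fin n) (Fin n) ℝ) (α : ℝ) :
    EuclideanSpace ℝ (Fin n) →ₗ[ℝ] EuclideanSpace ℝ (Fin n) :=
  Matrix.toEuclideanLin (U⁻¹ * Matrix.diagonal (fun i : Fin n => if i = 0 then α else 1) * U)

/-- The rotated grid point `p_{i,j} = i·d₁·v₁ + j·d₂·v₂` in `ℝ²`, indexed by integers. -/
noncomputable def gridPointZ (v₁ v₂ : EuclideanSpace ℝ (Fin 2)) (d₁ d₂ : ℝ) (i j : ℤ) :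
    EuclideanSpace ℝ (Fin 2) :=
  ((i : ℝ) * d₁) • v₁ + ((j : ℝ) * d₂) • v₂

lemma inner_sq_add_inner_sq_eq_norm_sq {E : Type*} [NormedAddCommGroup E] [InnerProductSpace ℝ E]
    (hE : Module.finrank ℝ E = 2) {v₁ v₂ : E} (hv₁ : ‖v₁‖ = 1) (hv₂ : ‖v₂‖ = 1)
    (hv₁₂ : ⟪v₁, v₂⟫ = 0) (x : E) : ⟪v₁, x⟫ ^ 2 + ⟪v₂, x⟫ ^ 2 = ‖x‖ ^ 2 := by
  have hon : Orthonormal ℝ ![v₁, v₂] := by simp [hv₁, hv₂, hv₁₂]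
  let b := basisOfOrthonormalOfCardEqFinrank hon (by simp [hE])
  have hb : ⇑b = ![v₁, v₂] := coe_basisOfOrthonormalOfCardEqFinrank _ _
  simpa [Fin.sum_univ_two, hb] using (b.toOrthonormalBasis (hb ▸ hon)).sum_sq_inner_right x

lemma norm_add_smul_inner_smul_sq {E : Type*} [NormedAddCommGroup E] [InnerProductSpace ℝ E]
    {u : E} (hu : ‖u‖ = 1) (α : ℝ) (x : E) :
    ‖x + ((α - 1) * ⟪u, x⟫) • u‖ ^ 2 = ‖x‖ ^ 2 + (α ^ 2 - 1) * ⟪u, x⟫ ^ 2 := by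
  rw [norm_add_sq_real, norm_smul, real_inner_smul_right, real_inner_comm, mul_pow, hu,
    Real.norm_eq_abs, sq_abs]
  ring

namespace Matrix

variable {n : ℕ}

lemma toEuclideanLin_mul_apply (A B : Matrix (Fin n) (Fin n) ℝ) (x : EuclideanSpace ℝ (Fin n)) :
    toEuclideanLin (A * B) x = toEuclideanLin A (toEuclideanLin B x) := by
  simp [toLpLin_apply, mulVec_mulVec]

lemma toEuclideanLin_diagonal_ite_zero [NeZero n] (α : ℝ) (y : EuclideanSpace ℝ (Fin n)) :
    toEuclideanLin (diagonal fun i : Fin n => if i = 0 then α else 1) y =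
      y + ((α - 1) * y 0) • EuclideanSpace.single 0 1 := by
  ext i
  by_cases hi : i = 0 <;> simp [toLpLin_apply, mulVec_diagonal, hi]
  ring

lemma inner_toEuclideanLin_transpose (A : Matrix (Fin n) (Fin n) ℝ)
    (x y : EuclideanSpace ℝ (Fin n)) :
    ⟪toEuclideanLin Aᵀ x, y⟫ = ⟪x, toEuclideanLin A y⟫ := by
  rw [← conjTranspose_eq_transpose_of_trivial, toEuclideanLin_conjTranspose_eq_adjoint,
    LinearMap.adjoint_inner_left]

section Orthogonal

variable {U : Matrix (Fin n) (Fin n) ℝ} (hU : U ∈ orthogonalGroup (Fin n) ℝ)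
include hU

lemma toEuclideanLin_transpose_apply_toEuclideanLin (x : EuclideanSpace ℝ (Fin n)) :
    toEuclideanLin Uᵀ (toEuclideanLin U x) = x := by
  rw [← toEuclideanLin_mul_apply, (mem_orthogonalGroup_iff' _ _).1 hU]
  simp

lemma norm_toEuclideanLin_of_mem_orthogonalGroup (x : EuclideanSpace ℝ (Fin n)) :
    ‖toEuclideanLin U x‖ = ‖x‖ := by
  rw [← sq_eq_sq₀ (norm_nonneg _) (norm_nonneg _), ← real_inner_self_eq_norm_sq,
    ← real_inner_self_eq_norm_sq, ← inner_toEuclideanLin_transpose,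
    toEuclideanLin_transpose_apply_toEuclideanLin hU]

end Orthogonal

end Matrix

open Matrix

section ScalingMap

variable {n : ℕ} [NeZero n] {U : Matrix (Fin n) (Fin n) ℝ} (hU : U ∈ orthogonalGroup (Fin n) ℝ)
  {u : EuclideanSpace ℝ (Fin n)} (hUu : toEuclideanLin U u = EuclideanSpace.single 0 1)
include hU hUu

lemma norm_eq_one_of_toEuclideanLin_eq_single : ‖u‖ = 1 := by
  rw [← norm_toEuclideanLin_of_mem_orthogonalGroup hU, hUu]
  simp

lemma scalingMap_apply (α : ℝ) (x : EuclideanSpace ℝ (Fin n)) :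
    scalingMap U α x = x + ((α - 1) * ⟪u, x⟫) • u := by
  have hinv : U⁻¹ = Uᵀ := inv_eq_left_inv ((mem_orthogonalGroup_iff' _ _).1 hU)
  have hu : toEuclideanLin Uᵀ (EuclideanSpace.single 0 1) = u := by
    rw [← hUu, toEuclideanLin_transpose_apply_toEuclideanLin hU]
  have hcoord : toEuclideanLin U x 0 = ⟪u, x⟫ := by
    rw [← hu, inner_toEuclideanLin_transpose, EuclideanSpace.inner_single_left]
    simp
  rw [scalingMap, toEuclideanLin_mul_apply, toEuclideanLin_mul_apply,
    toEuclideanLin_diagonal_ite_zero, hinv, map_add, map_smul,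
    toEuclideanLin_transpose_apply_toEuclideanLin hU, hu, hcoord]

lemma norm_scalingMap_sq (α : ℝ) (x : EuclideanSpace ℝ (Fin n)) :
    ‖scalingMap U α x‖ ^ 2 = ‖x‖ ^ 2 + (α ^ 2 - 1) * ⟪u, x⟫ ^ 2 := by
  rw [scalingMap_apply hU hUu,
    norm_add_smul_inner_smul_sq (norm_eq_one_of_toEuclideanLin_eq_single hU hUu)]

lemma norm_scalingMap_of_norm_eq_one (α : ℝ) {v : EuclideanSpace ℝ (Fin n)} (hv : ‖v‖ = 1) :
    ‖scalingMap U α v‖ = √((α ^ 2 - 1) * ⟪u, v⟫ ^ 2 + 1) := by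
  rw [← Real.sqrt_sq (norm_nonneg (scalingMap U α v)), norm_scalingMap_sq hU hUu, hv]
  ring_nf

lemma norm_le_norm_scalingMap {α : ℝ} (hα : 1 ≤ α) (x : EuclideanSpace ℝ (Fin n)) :
    ‖x‖ ≤ ‖scalingMap U α x‖ := by
  rw [← pow_le_pow_iff_left₀ (norm_nonneg _) (norm_nonneg _) two_ne_zero,
    norm_scalingMap_sq hU hUu]
  have : 0 ≤ (α ^ 2 - 1) * ⟪u, x⟫ ^ 2 := mul_nonneg (by nlinarith) (sq_nonneg _)
  linarith

end ScalingMap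

section Grid

variable (v₁ v₂ : EuclideanSpace ℝ (Fin 2)) (d₁ d₂ : ℝ)

lemma gridPointZ_sub (i j i' j' : ℤ) :
    gridPointZ v₁ v₂ d₁ d₂ i j - gridPointZ v₁ v₂ d₁ d₂ i' j' =
      gridPointZ v₁ v₂ d₁ d₂ (i - i') (j - j') := by
  simp only [gridPointZ, Int.cast_sub]
  module

lemma gridPointZ_one_zero : gridPointZ v₁ v₂ d₁ d₂ 1 0 = d₁ • v₁ := by
  simp [gridPointZ]

lemma gridPointZ_zero_one : gridPointZ v₁ v₂ d₁ d₂ 0 1 = d₂ • v₂ := by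
  simp [gridPointZ]

variable {v₁ v₂}

lemma inner_gridPointZ_right (hv₂ : ‖v₂‖ = 1) (hv₁₂ : ⟪v₁, v₂⟫ = 0) (i j : ℤ) :
    ⟪v₂, gridPointZ v₁ v₂ d₁ d₂ i j⟫ = j * d₂ := by
  rw [gridPointZ, inner_add_right, real_inner_smul_right, real_inner_smul_right,
    real_inner_comm, hv₁₂, real_inner_self_eq_norm_sq, hv₂]
  ring

lemma le_norm_gridPointZ (hv₂ : ‖v₂‖ = 1) (hv₁₂ : ⟪v₁, v₂⟫ = 0) (i : ℤ) {j : ℤ} (hj : j ≠ 0) :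
    d₂ ≤ ‖gridPointZ v₁ v₂ d₁ d₂ i j‖ := by
  have hj_abs : (1 : ℝ) ≤ |(j : ℝ)| := by exact_mod_cast Int.one_le_abs hj
  calc d₂ ≤ |d₂| := le_abs_self d₂
    _ ≤ |(j : ℝ)| * |d₂| := le_mul_of_one_le_left (abs_nonneg _) hj_abs
    _ = |⟪v₂, gridPointZ v₁ v₂ d₁ d₂ i j⟫| := by rw [inner_gridPointZ_right d₁ d₂ hv₂ hv₁₂, abs_mul]
    _ ≤ ‖gridPointZ v₁ v₂ d₁ d₂ i j‖ := by
      simpa [hv₂] using abs_real_inner_le_norm v₂ (gridPointZ v₁ v₂ d₁ d₂ i j)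

end Grid

theorem scaled_grid_distances_general (v₁ v₂ : EuclideanSpace ℝ (Fin 2))
    (hv₁ : ‖v₁‖ = 1) (hv₂ : ‖v₂‖ = 1) (hv₁₂ : ⟪v₁, v₂⟫ = 0)
    (d₁ d₂ : ℝ) (hd₁ : 0 < d₁) (hd₁₂ : d₁ < d₂)
    (u : EuclideanSpace ℝ (Fin 2)) (s : ℝ) (hs : 1 ≤ s)
    (U : Matrix (Fin 2) (Fin 2) ℝ) (hU : U ∈ Matrix.orthogonalGroup (Fin 2) ℝ)
    (hUu : Matrix.toEuclideanLin U u = EuclideanSpace.single 0 1) :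
    (∀ i j : ℤ,
      ‖scalingMap U s (gridPointZ v₁ v₂ d₁ d₂ (i + 1) j) -
          scalingMap U s (gridPointZ v₁ v₂ d₁ d₂ i j)‖ =
        Real.sqrt ((s ^ 2 - 1) * ⟪u, v₁⟫ ^ 2 + 1) * d₁) ∧
    (∀ i j : ℤ,
      ‖scalingMap U s (gridPointZ v₁ v₂ d₁ d₂ i (j + 1)) -
          scalingMap U s (gridPointZ v₁ v₂ d₁ d₂ i j)‖ =
        Real.sqrt ((s ^ 2 - 1) * (1 - ⟪u, v₁⟫ ^ 2) + 1) * d₂) ∧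
    (∀ i i' j j' : ℤ, j ≠ j' →
      d₂ ≤ ‖scalingMap U s (gridPointZ v₁ v₂ d₁ d₂ i j) -
          scalingMap U s (gridPointZ v₁ v₂ d₁ d₂ i' j')‖) := by
  have hd₂ : 0 < d₂ := hd₁.trans hd₁₂
  have hu : ‖u‖ = 1 := norm_eq_one_of_toEuclideanLin_eq_single hU hUu
  have hu₂ : ⟪u, v₂⟫ ^ 2 = 1 - ⟪u, v₁⟫ ^ 2 := by
    have := inner_sq_add_inner_sq_eq_norm_sq finrank_euclideanSpace_fin hv₁ hv₂ hv₁₂ u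
    rw [hu, real_inner_comm u, real_inner_comm u] at this
    linarith
  refine ⟨fun i j => ?_, fun i j => ?_, fun i i' j j' hjj' => ?_⟩
  · rw [← map_sub, gridPointZ_sub, add_sub_cancel_left, sub_self, gridPointZ_one_zero, map_smul,
      norm_smul, norm_scalingMap_of_norm_eq_one hU hUu s hv₁, Real.norm_of_nonneg hd₁.le, mul_comm]
  · rw [← map_sub, gridPointZ_sub, sub_self, add_sub_cancel_left, gridPointZ_zero_one, map_smul,
      norm_smul, norm_scalingMap_of_norm_eq_one hU hUu s hv₂, Real.norm_of_nonneg hd₂.le,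
      hu₂, mul_comm]
  · rw [← map_sub, gridPointZ_sub]
    exact (le_norm_gridPointZ d₁ d₂ hv₂ hv₁₂ _ (sub_ne_zero.mpr hjj')).trans
      (norm_le_norm_scalingMap hU hUu hs _)

/-- with `c = ⟨u, v₁⟩`, `s₁ = √((s²−1)c²+1)` and `s₂ = √((s²−1)(1−c²)+1)`, the
scaled grid has horizontal neighbour distances `s₁·d₁`, vertical neighbour distances `s₂·d₂`,
and any two scaled grid points in different rows are at distance at least `d₂`. -/
theorem scaled_grid_distances (v₁ v₂ : EuclideanSpace ℝ (Fin 2))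
    (hv₁ : ‖v₁‖ = 1) (hv₂ : ‖v₂‖ = 1) (hv₁₂ : ⟪v₁, v₂⟫ = 0)
    (d₁ d₂ : ℝ) (hd₁ : 0 < d₁) (hd₁₂ : d₁ < d₂)
    (u : EuclideanSpace ℝ (Fin 2)) (hu : ‖u‖ = 1) (s : ℝ) (hs : 1 ≤ s)
    (U : Matrix (Fin 2) (Fin 2) ℝ) (hU : U ∈ Matrix.orthogonalGroup (Fin 2) ℝ)
    (hUu : Matrix.toEuclideanLin U u = EuclideanSpace.single 0 1) :
    (∀ i j : ℤ,
      ‖scalingMap U s (gridPointZ v₁ v₂ d₁ d₂ (i + 1) j) -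
          scalingMap U s (gridPointZ v₁ v₂ d₁ d₂ i j)‖ =
        Real.sqrt ((s ^ 2 - 1) * ⟪u, v₁⟫ ^ 2 + 1) * d₁) ∧
    (∀ i j : ℤ,
      ‖scalingMap U s (gridPointZ v₁ v₂ d₁ d₂ i (j + 1)) -
          scalingMap U s (gridPointZ v₁ v₂ d₁ d₂ i j)‖ =
        Real.sqrt ((s ^ 2 - 1) * (1 - ⟪u, v₁⟫ ^ 2) + 1) * d₂) ∧
    (∀ i i' j j' : ℤ, j ≠ j' →
      d₂ ≤ ‖scalingMap U s (gridPointZ v₁ v₂ d₁ d₂ i j) -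
          scalingMap U s (gridPointZ v₁ v₂ d₁ d₂ i' j')‖) :=
  scaled_grid_distances_general v₁ v₂ hv₁ hv₂ hv₁₂ d₁ d₂ hd₁ hd₁₂ u s hs U hU hUu
end

section
/- Let g, g′ ∈ ℝⁿ with ‖g − g′‖₂ = d₁ > 0, let δ ≥ 0 with 2δ < d₁, let x, x′ ∈ ℝⁿ with ‖x − g‖₂ ≤ δ and ‖x′ − g′‖₂ ≤ δ, let u be a unit vector in ℝⁿ, let s ≥ 1, and set s₁ := ‖S_{u,s}(g) − S_{u,s}(g′)‖₂ / d₁. Then x ≠ x′ and the multiplicative shift of the pair satisfies (s₁·d₁ − 2sδ)/(d₁ + 2δ) ≤ ‖S_{u,s}(x) − S_{u,s}(x′)‖₂ / ‖x − x′‖₂ ≤ (s₁·d₁ + 2sδ)/(d₁ − 2δ). -/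
open scoped RealInnerProductSpace

private lemma teLin_mul {n : ℕ} (A B : Matrix (Fin n) (Fin n) ℝ) (v : EuclideanSpace ℝ (Fin n)) :
    Matrix.toEuclideanLin (A * B) v = Matrix.toEuclideanLin A (Matrix.toEuclideanLin B v) := by
  simp [Matrix.toEuclideanLin_apply, Matrix.mulVec_mulVec]

private lemma norm_orth {n : ℕ} (U : Matrix (Fin n) (Fin n) ℝ)
    (hU : U ∈ Matrix.orthogonalGroup (Fin n) ℝ) (v : EuclideanSpace ℝ (Fin n)) :
    ‖Matrix.toEuclideanLin U v‖ = ‖v‖ := by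
  have h1 : star U * U = 1 := (Matrix.mem_orthogonalGroup_iff' (Fin n) ℝ).mp hU
  have h : ⟪Matrix.toEuclideanLin U v, Matrix.toEuclideanLin U v⟫ = ⟪v, v⟫ := by
    rw [← LinearMap.adjoint_inner_left, ← Matrix.toEuclideanLin_conjTranspose_eq_adjoint,
      ← teLin_mul]
    have h1' : U.conjTranspose * U = 1 := h1
    rw [h1']
    simp [Matrix.toEuclideanLin_apply]
  have h2 : ‖Matrix.toEuclideanLin U v‖ ^ 2 = ‖v‖ ^ 2 := by
    rw [← real_inner_self_eq_norm_sq, ← real_inner_self_eq_norm_sq, h]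
  nlinarith [norm_nonneg (Matrix.toEuclideanLin U v), norm_nonneg v]
private lemma diag_bounds {n : ℕ} [NeZero n] (s : ℝ) (hs : 1 ≤ s) (w : EuclideanSpace ℝ (Fin n)) :
    ‖(Matrix.toEuclideanLin (Matrix.diagonal fun i : Fin n => if i = 0 then s else 1)) w‖ ≤ s * ‖w‖
    ∧ ‖w‖ ≤ ‖(Matrix.toEuclideanLin (Matrix.diagonal fun i : Fin n => if i = 0 then s else 1)) w‖ := by
  have hs0 : (0:ℝ) ≤ s := le_trans zero_le_one hs
  set d : Fin n → ℝ := fun i => if i = 0 then s else 1 with hd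
  have hDw : ∀ i, ((Matrix.toEuclideanLin (Matrix.diagonal d)) w) i = d i * w i := by
    intro i
    simp [Matrix.toEuclideanLin_apply, Matrix.mulVec_diagonal]
  have hn1 : ‖(Matrix.toEuclideanLin (Matrix.diagonal d)) w‖
      = Real.sqrt (∑ i, (d i * w i) ^ 2) := by
    rw [EuclideanSpace.norm_eq]
    congr 1
    refine Finset.sum_congr rfl fun i _ => ?_
    rw [hDw i, Real.norm_eq_abs, sq_abs]
  have hn2 : ‖w‖ = Real.sqrt (∑ i, (w i) ^ 2) := by
    rw [EuclideanSpace.norm_eq]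
    congr 1
    refine Finset.sum_congr rfl fun i _ => ?_
    rw [Real.norm_eq_abs, sq_abs]
  have hdi : ∀ i, 1 ≤ d i ∧ d i ≤ s := by
    intro i; by_cases h : i = 0 <;> simp [hd, h, hs]
  constructor
  · rw [hn1, hn2, ← Real.sqrt_sq hs0, ← Real.sqrt_mul (sq_nonneg s)]
    apply Real.sqrt_le_sqrt
    rw [Finset.mul_sum]
    refine Finset.sum_le_sum fun i _ => ?_
    have h1 := (hdi i).1; have h2 := (hdi i).2
    rw [mul_pow]
    exact mul_le_mul_of_nonneg_right (by nlinarith) (sq_nonneg _)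
  · rw [hn1, hn2]
    apply Real.sqrt_le_sqrt
    refine Finset.sum_le_sum fun i _ => ?_
    have h1 := (hdi i).1
    rw [mul_pow]
    have h2 : (1:ℝ) ≤ d i ^ 2 := by nlinarith
    nlinarith [mul_le_mul_of_nonneg_right h2 (sq_nonneg (w i))]

private lemma scaling_norm_bounds {n : ℕ} [NeZero n] (U : Matrix (Fin n) (Fin n) ℝ)
    (hU : U ∈ Matrix.orthogonalGroup (Fin n) ℝ) (s : ℝ) (hs : 1 ≤ s)
    (v : EuclideanSpace ℝ (Fin n)) :
    ‖scalingMap U s v‖ ≤ s * ‖v‖ ∧ ‖v‖ ≤ ‖scalingMap U s v‖ := by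
  have hinv : U⁻¹ = star U :=
    Matrix.inv_eq_right_inv ((Matrix.mem_orthogonalGroup_iff (Fin n) ℝ).mp hU)
  have hstar : star U ∈ Matrix.orthogonalGroup (Fin n) ℝ := Unitary.star_mem hU
  have hrw : scalingMap U s v = Matrix.toEuclideanLin (star U)
      ((Matrix.toEuclideanLin (Matrix.diagonal fun i : Fin n => if i = 0 then s else 1))
        (Matrix.toEuclideanLin U v)) := by
    rw [scalingMap, hinv, teLin_mul, teLin_mul]
  have h1 := norm_orth (star U) hstar
    ((Matrix.toEuclideanLin (Matrix.diagonal fun i : Fin n => if i = 0 then s else 1))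
      (Matrix.toEuclideanLin U v))
  have h2 := norm_orth U hU v
  have h3 := diag_bounds s hs (Matrix.toEuclideanLin U v)
  rw [hrw, h1]
  rw [h2] at h3
  exact h3
/-- for grid points `g, g'` at distance `d₁ > 0`, noisy points `x, x'` within
`δ` of them with `2δ < d₁`, and `s₁ = ‖S_{u,s}g − S_{u,s}g'‖/d₁`, the points `x, x'` are
distinct and the multiplicative shift of the pair lies in
`[(s₁d₁ − 2sδ)/(d₁ + 2δ), (s₁d₁ + 2sδ)/(d₁ − 2δ)]`. -/
theorem noisy_pair_multiplicative_shift {n : ℕ} [NeZero n]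
    (g g' x x' : EuclideanSpace ℝ (Fin n)) (d₁ δ : ℝ) (hd₁ : 0 < d₁)
    (hgg' : ‖g - g'‖ = d₁) (hδ : 0 ≤ δ) (hδd : 2 * δ < d₁)
    (hx : ‖x - g‖ ≤ δ) (hx' : ‖x' - g'‖ ≤ δ)
    (u : EuclideanSpace ℝ (Fin n)) (hu : ‖u‖ = 1) (s : ℝ) (hs : 1 ≤ s)
    (U : Matrix (Fin n) (Fin n) ℝ) (hU : U ∈ Matrix.orthogonalGroup (Fin n) ℝ)
    (hUu : Matrix.toEuclideanLin U u = EuclideanSpace.single 0 1)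
    (s₁ : ℝ) (hs₁ : s₁ = ‖scalingMap U s g - scalingMap U s g'‖ / d₁) :
    x ≠ x' ∧
    (s₁ * d₁ - 2 * s * δ) / (d₁ + 2 * δ) ≤
      ‖scalingMap U s x - scalingMap U s x'‖ / ‖x - x'‖ ∧
    ‖scalingMap U s x - scalingMap U s x'‖ / ‖x - x'‖ ≤
      (s₁ * d₁ + 2 * s * δ) / (d₁ - 2 * δ) := by
  have hs0 : (0:ℝ) ≤ s := le_trans zero_le_one hs
  have hb := scaling_norm_bounds U hU s hs
  set S := scalingMap U s with hSdef
  have hgx : ‖g - x‖ ≤ δ := by rw [norm_sub_rev]; exact hx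
  have hg'x' : ‖g' - x'‖ ≤ δ := by rw [norm_sub_rev]; exact hx'
  have hlow : d₁ - 2 * δ ≤ ‖x - x'‖ := by
    have hdec : g - g' = (g - x) + (x - x') + (x' - g') := by abel
    have h := norm_add₃_le (E := EuclideanSpace ℝ (Fin n)) (a := g - x) (b := x - x') (c := x' - g')
    rw [← hdec, hgg'] at h
    linarith
  have hpos : 0 < ‖x - x'‖ := lt_of_lt_of_le (by linarith) hlow
  have hne : x ≠ x' := by
    intro h
    rw [h, sub_self, norm_zero] at hpos
    exact lt_irrefl 0 hpos
  have hhigh : ‖x - x'‖ ≤ d₁ + 2 * δ := by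
    have hdec : x - x' = (x - g) + (g - g') + (g' - x') := by abel
    have h := norm_add₃_le (E := EuclideanSpace ℝ (Fin n)) (a := x - g) (b := g - g') (c := g' - x')
    rw [← hdec, hgg'] at h
    linarith
  have hSgg : ‖S (g - g')‖ = s₁ * d₁ := by
    rw [hs₁, ← map_sub]
    field_simp
  have hs₁0 : 0 ≤ s₁ := by
    rw [hs₁]
    exact div_nonneg (norm_nonneg _) (le_of_lt hd₁)
  have hSxg : ‖S (x - g)‖ ≤ s * δ :=
    le_trans (hb (x - g)).1 (mul_le_mul_of_nonneg_left hx hs0)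
  have hSgx : ‖S (g - x)‖ ≤ s * δ :=
    le_trans (hb (g - x)).1 (mul_le_mul_of_nonneg_left hgx hs0)
  have hSx'g' : ‖S (x' - g')‖ ≤ s * δ :=
    le_trans (hb (x' - g')).1 (mul_le_mul_of_nonneg_left hx' hs0)
  have hSg'x' : ‖S (g' - x')‖ ≤ s * δ :=
    le_trans (hb (g' - x')).1 (mul_le_mul_of_nonneg_left hg'x' hs0)
  have hS_hi : ‖S (x - x')‖ ≤ s₁ * d₁ + 2 * s * δ := by
    have hdec : S (x - x') = S (x - g) + S (g - g') + S (g' - x') := by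
      rw [← map_add, ← map_add]
      congr 1
      abel
    rw [hdec]
    have h := norm_add₃_le (E := EuclideanSpace ℝ (Fin n)) (a := S (x - g)) (b := S (g - g'))
      (c := S (g' - x'))
    rw [hSgg] at h
    linarith
  have hS_lo : s₁ * d₁ - 2 * s * δ ≤ ‖S (x - x')‖ := by
    have hdec : S (g - g') = S (g - x) + S (x - x') + S (x' - g') := by
      rw [← map_add, ← map_add]
      congr 1
      abel
    have h := norm_add₃_le (E := EuclideanSpace ℝ (Fin n)) (a := S (g - x)) (b := S (x - x'))
      (c := S (x' - g'))
    rw [← hdec, hSgg] at h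
    linarith
  have hmap : S x - S x' = S (x - x') := (map_sub S x x').symm
  refine ⟨hne, ?_, ?_⟩
  · rw [hmap]
    exact div_le_div₀ (norm_nonneg _) hS_lo hpos hhigh
  · rw [hmap]
    have hnum : 0 ≤ s₁ * d₁ + 2 * s * δ := by
      have := mul_nonneg hs₁0 (le_of_lt hd₁)
      have := mul_nonneg (mul_nonneg (by norm_num : (0:ℝ) ≤ 2) hs0) hδ
      linarith
    exact div_le_div₀ hnum hS_hi (by linarith) hlow
end
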